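/- arXiv:1910.08107 — 2 statements merged into one kernel-verified Lean document; each statement's English description precedes it below -/
import Mathlib

section
/- Under the two-group heteroscedastic mixture model, the function t ↦ α(t) is nondecreasing: if 0 < t_1 < t_2 < 1 and P(T_1 < t_1) > 0, then α(t_1) ≤ α(t_2). -/
open MeasureTheory ProbabilityTheory Set Filter

noncomputable section

/-- Density of the `N(0, s²)` distribution, i.e. the null density `f_{0,s}(x) = φ(x/s)/s`. -/
def gaussDens (s x : ℝ) : ℝ :=
  (s * Real.sqrt (2 * Real.pi))⁻¹ * Real.exp (-(x / s) ^ 2 / 2)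

/-- The alternative density `f_{1,s}(x) = ∫ φ((x−u)/s)/s dg_μ(u)`. -/
def altDens (gmu : Measure ℝ) (s x : ℝ) : ℝ :=
  ∫ u, gaussDens s (x - u) ∂gmu

/-- The mixture density `f_s(x) = (1−π) f_{0,s}(x) + π f_{1,s}(x)`. -/
def mixDens (p : ℝ) (gmu : Measure ℝ) (s x : ℝ) : ℝ :=
  (1 - p) * gaussDens s x + p * altDens gmu s x

/-- The oracle statistic `T(x, σ) = (1−π) f_{0,σ}(x) / f_σ(x) = P(θ = 0 | x, σ)`. -/
def Tstat (p : ℝ) (gmu : Measure ℝ) (s x : ℝ) : ℝ :=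
  (1 - p) * gaussDens s x / mixDens p gmu s x

/-- Marginal false discovery rate `mFDR(δ) = E[Σᵢ (1−θᵢ)δᵢ] / E[Σᵢ δᵢ]`. -/
def mFDR {Ω : Type} [MeasurableSpace Ω] (P : Measure Ω) {m : ℕ}
    (θ δ : Fin m → Ω → ℕ) : ℝ :=
  (∫ ω, ∑ i, (1 - (θ i ω : ℝ)) * (δ i ω : ℝ) ∂P) / ∫ ω, ∑ i, ((δ i ω : ℝ)) ∂P

/-- Expected number of true positives `ETP(δ) = E[Σᵢ θᵢδᵢ]`. -/
def ETP {Ω : Type} [MeasurableSpace Ω] (P : Measure Ω) {m : ℕ}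
    (θ δ : Fin m → Ω → ℕ) : ℝ :=
  ∫ ω, ∑ i, (θ i ω : ℝ) * (δ i ω : ℝ) ∂P

end

/-!
`α(t)` divides the expected sum of the values `Tᵢ < t` by their expected number, so it is an
average of values below `t`; in particular `α(t₁) ≤ t₁`. Raising the threshold to `t₂` adds to the
numerator at least `t₁` times what it adds to the denominator, so the average cannot decrease.
-/

open Finset

lemma div_le_div_of_le_mul_of_mul_sub_le {K : Type*} [Field K] [LinearOrder K]
    [IsStrictOrderedRing K] {A₁ A₂ N₁ N₂ t : K} (hN₁ : 0 < N₁) (hN : N₁ ≤ N₂)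
    (hA₁ : A₁ ≤ t * N₁) (hinc : t * (N₂ - N₁) ≤ A₂ - A₁) : A₁ / N₁ ≤ A₂ / N₂ := by
  rw [div_le_div_iff₀ hN₁ (hN₁.trans_le hN)]
  nlinarith [mul_le_mul_of_nonneg_right hA₁ (sub_nonneg.2 hN),
    mul_le_mul_of_nonneg_right hinc hN₁.le]

section Pointwise

variable {x t t₁ t₂ : ℝ}

lemma ite_lt_le_ite_lt (h : t₁ ≤ t₂) :
    (if x < t₁ then (1 : ℝ) else 0) ≤ if x < t₂ then 1 else 0 := by
  split_ifs <;> linarith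

lemma mul_ite_lt_le_mul_ite_lt :
    x * (if x < t then (1 : ℝ) else 0) ≤ t * if x < t then 1 else 0 := by
  split_ifs with h
  · simpa using h.le
  · simp

lemma mul_sub_ite_lt_le (h : t₁ ≤ t₂) :
    t₁ * ((if x < t₂ then (1 : ℝ) else 0) - if x < t₁ then 1 else 0) ≤
      x * (if x < t₂ then (1 : ℝ) else 0) - x * if x < t₁ then 1 else 0 := by
  split_ifs <;> simp <;> linarith

end Pointwise

section Threshold

variable {Ω ι : Type*} [MeasurableSpace Ω] [Fintype ι]

noncomputable def belowCount (μ : Measure Ω) (T : ι → Ω → ℝ) (t : ℝ) : ℝ :=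
  ∫ ω, ∑ i, (if T i ω < t then (1 : ℝ) else 0) ∂μ

noncomputable def belowMass (μ : Measure Ω) (T : ι → Ω → ℝ) (t : ℝ) : ℝ :=
  ∫ ω, ∑ i, T i ω * (if T i ω < t then (1 : ℝ) else 0) ∂μ

variable {μ : Measure Ω} {T : ι → Ω → ℝ}

lemma integrable_sum_ite_lt [IsFiniteMeasure μ] (hT : ∀ i, Measurable (T i)) (t : ℝ) :
    Integrable (fun ω => ∑ i, if T i ω < t then (1 : ℝ) else 0) μ :=
  integrable_finsetSum _ fun i _ =>
    (integrable_const 1).indicator (measurableSet_lt (hT i) measurable_const)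

lemma integrable_sum_mul_ite_lt (hT : ∀ i, Measurable (T i)) (hTi : ∀ i, Integrable (T i) μ)
    (t : ℝ) : Integrable (fun ω => ∑ i, T i ω * if T i ω < t then (1 : ℝ) else 0) μ := by
  refine integrable_finsetSum _ fun i _ => ?_
  simp only [mul_ite, mul_one, mul_zero]
  exact (hTi i).indicator (measurableSet_lt (hT i) measurable_const)

lemma belowCount_pos [IsFiniteMeasure μ] (hT : ∀ i, Measurable (T i)) {t : ℝ} (i₀ : ι)
    (hpos : 0 < μ {ω | T i₀ ω < t}) : 0 < belowCount μ T t := by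
  have hs : MeasurableSet {ω | T i₀ ω < t} := measurableSet_lt (hT i₀) measurable_const
  calc (0 : ℝ) < μ.real {ω | T i₀ ω < t} := ENNReal.toReal_pos hpos.ne' (measure_ne_top μ _)
    _ = ∫ ω, if T i₀ ω < t then (1 : ℝ) else 0 ∂μ := (integral_indicator_one hs).symm
    _ ≤ belowCount μ T t :=
      integral_mono ((integrable_const 1).indicator hs) (integrable_sum_ite_lt hT t) fun ω =>
        single_le_sum (f := fun i => if T i ω < t then (1 : ℝ) else 0)
          (fun i _ => by split_ifs <;> norm_num) (mem_univ i₀)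

theorem belowMass_div_belowCount_mono [IsFiniteMeasure μ] (hT : ∀ i, Measurable (T i))
    (hTi : ∀ i, Integrable (T i) μ) {t₁ t₂ : ℝ} (ht : t₁ ≤ t₂) (i₀ : ι)
    (hpos : 0 < μ {ω | T i₀ ω < t₁}) :
    belowMass μ T t₁ / belowCount μ T t₁ ≤ belowMass μ T t₂ / belowCount μ T t₂ := by
  have hN : belowCount μ T t₁ ≤ belowCount μ T t₂ :=
    integral_mono (integrable_sum_ite_lt hT t₁) (integrable_sum_ite_lt hT t₂) fun ω =>
      sum_le_sum fun i _ => ite_lt_le_ite_lt ht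
  have hA₁ : belowMass μ T t₁ ≤ t₁ * belowCount μ T t₁ := by
    rw [belowCount, ← integral_const_mul]
    refine integral_mono (integrable_sum_mul_ite_lt hT hTi t₁)
      ((integrable_sum_ite_lt hT t₁).const_mul t₁) fun ω => ?_
    simp only [mul_sum]
    exact sum_le_sum fun i _ => mul_ite_lt_le_mul_ite_lt
  have hinc : t₁ * (belowCount μ T t₂ - belowCount μ T t₁) ≤
      belowMass μ T t₂ - belowMass μ T t₁ := by
    rw [belowCount, belowCount, belowMass, belowMass,
      ← integral_sub (integrable_sum_ite_lt hT t₂) (integrable_sum_ite_lt hT t₁),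
      ← integral_sub (integrable_sum_mul_ite_lt hT hTi t₂) (integrable_sum_mul_ite_lt hT hTi t₁),
      ← integral_const_mul]
    refine integral_mono
      (((integrable_sum_ite_lt hT t₂).sub (integrable_sum_ite_lt hT t₁)).const_mul t₁)
      ((integrable_sum_mul_ite_lt hT hTi t₂).sub (integrable_sum_mul_ite_lt hT hTi t₁))
      fun ω => ?_
    simp only [← sum_sub_distrib, mul_sum]
    exact sum_le_sum fun i _ => mul_sub_ite_lt_le ht
  exact div_le_div_of_le_mul_of_mul_sub_le (belowCount_pos hT i₀ hpos) hN hA₁ hinc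

end Threshold

section Densities

lemma gaussDens_nonneg {s : ℝ} (hs : 0 ≤ s) (x : ℝ) : 0 ≤ gaussDens s x := by
  unfold gaussDens
  positivity

lemma gaussDens_nonpos {s : ℝ} (hs : s ≤ 0) (x : ℝ) : gaussDens s x ≤ 0 :=
  mul_nonpos_of_nonpos_of_nonneg
    (inv_nonpos.mpr (mul_nonpos_of_nonpos_of_nonneg hs (Real.sqrt_nonneg _)))
    (Real.exp_pos _).le

lemma div_add_mem_Icc_of_nonneg {a b : ℝ} (ha : 0 ≤ a) (hb : 0 ≤ b) :
    a / (a + b) ∈ Icc (0 : ℝ) 1 := by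
  rcases (add_nonneg ha hb).eq_or_lt with h0 | h0
  · simp [show a = 0 by linarith]
  · exact ⟨div_nonneg ha h0.le, (div_le_one h0).mpr (by linarith)⟩

lemma div_add_mem_Icc_of_nonpos {a b : ℝ} (ha : a ≤ 0) (hb : b ≤ 0) :
    a / (a + b) ∈ Icc (0 : ℝ) 1 := by
  rw [← neg_div_neg_eq, neg_add]
  exact div_add_mem_Icc_of_nonneg (neg_nonneg.2 ha) (neg_nonneg.2 hb)

/-- For `s ≤ 0` the "densities" are junk, but both terms of `mixDens` are then `≤ 0`, so the
statistic still lies in `[0, 1]`. -/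
lemma Tstat_mem_Icc {p : ℝ} (hp : p ∈ Ioo (0 : ℝ) 1) (gmu : Measure ℝ) (s x : ℝ) :
    Tstat p gmu s x ∈ Icc (0 : ℝ) 1 := by
  have h1p : 0 ≤ 1 - p := by linarith [hp.2]
  rcases le_total s 0 with hs | hs
  · exact div_add_mem_Icc_of_nonpos (mul_nonpos_of_nonneg_of_nonpos h1p (gaussDens_nonpos hs x))
      (mul_nonpos_of_nonneg_of_nonpos hp.1.le (integral_nonpos fun _ => gaussDens_nonpos hs _))
  · exact div_add_mem_Icc_of_nonneg (mul_nonneg h1p (gaussDens_nonneg hs x))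
      (mul_nonneg hp.1.le (integral_nonneg fun _ => gaussDens_nonneg hs _))

lemma measurable_gaussDens : Measurable fun q : ℝ × ℝ => gaussDens q.1 q.2 := by
  unfold gaussDens
  fun_prop

lemma measurable_altDens (gmu : Measure ℝ) [SFinite gmu] :
    Measurable fun q : ℝ × ℝ => altDens gmu q.1 q.2 :=
  have h : StronglyMeasurable fun q : (ℝ × ℝ) × ℝ => gaussDens q.1.1 (q.1.2 - q.2) :=
    (measurable_gaussDens.comp ((measurable_fst.comp measurable_fst).prodMk
      ((measurable_snd.comp measurable_fst).sub measurable_snd))).stronglyMeasurable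
  h.integral_prod_right'.measurable

lemma measurable_Tstat (p : ℝ) (gmu : Measure ℝ) [SFinite gmu] :
    Measurable fun q : ℝ × ℝ => Tstat p gmu q.1 q.2 :=
  (measurable_const.mul measurable_gaussDens).div
    ((measurable_const.mul measurable_gaussDens).add
      (measurable_const.mul (measurable_altDens gmu)))

end Densities

theorem statement3_general
    {Ω : Type} [MeasurableSpace Ω] (P : Measure Ω) [IsProbabilityMeasure P]
    (m : ℕ) (p : ℝ) (hp : p ∈ Ioo (0 : ℝ) 1)
    (gmu : Measure ℝ) [IsProbabilityMeasure gmu]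
    (sig X : Fin m → Ω → ℝ)
    (hsigmeas : ∀ i, Measurable (sig i))
    (hXmeas : ∀ i, Measurable (X i))
    (hm : 0 < m)
    (alphaFun : ℝ → ℝ)
    (halphaFun : ∀ t : ℝ, alphaFun t =
      (∫ ω, ∑ i, Tstat p gmu (sig i ω) (X i ω) *
          (if Tstat p gmu (sig i ω) (X i ω) < t then (1 : ℝ) else 0) ∂P) /
        (∫ ω, ∑ i, (if Tstat p gmu (sig i ω) (X i ω) < t then (1 : ℝ) else 0) ∂P))
    (t₁ t₂ : ℝ) (ht₁₂ : t₁ < t₂)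
    (hpos : 0 < P {ω | Tstat p gmu (sig ⟨0, hm⟩ ω) (X ⟨0, hm⟩ ω) < t₁}) :
    alphaFun t₁ ≤ alphaFun t₂ := by
  set T : Fin m → Ω → ℝ := fun i ω => Tstat p gmu (sig i ω) (X i ω)
  have hT : ∀ i, Measurable (T i) := fun i =>
    (measurable_Tstat p gmu).comp ((hsigmeas i).prodMk (hXmeas i))
  have hTi : ∀ i, Integrable (T i) P := fun i =>
    .of_bound (hT i).aestronglyMeasurable 1 (ae_of_all _ fun ω => by
      have h := Tstat_mem_Icc hp gmu (sig i ω) (X i ω)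
      rw [Real.norm_eq_abs, abs_le]
      exact ⟨by linarith [h.1], h.2⟩)
  rw [halphaFun, halphaFun]
  exact belowMass_div_belowCount_mono hT hTi ht₁₂.le ⟨0, hm⟩ hpos

/-- the mFDR `α(t)` of the oracle threshold rule `(1{Tᵢ < t})ᵢ` is
nondecreasing in the threshold `t`. -/
theorem statement3
    {Ω : Type} [MeasurableSpace Ω] (P : Measure Ω) [IsProbabilityMeasure P]
    (m : ℕ) (p : ℝ) (hp : p ∈ Ioo (0 : ℝ) 1)
    (gsig gmu : Measure ℝ) [IsProbabilityMeasure gsig] [IsProbabilityMeasure gmu]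
    (hgsig : gsig (Iic 0) = 0)
    (θ : Fin m → Ω → ℕ) (sig X : Fin m → Ω → ℝ)
    (hθmeas : ∀ i, Measurable (θ i)) (hsigmeas : ∀ i, Measurable (sig i))
    (hXmeas : ∀ i, Measurable (X i))
    (hθval : ∀ i ω, θ i ω ≤ 1)
    (hindep : iIndepFun
      (fun i ω => (θ i ω, sig i ω, X i ω)) P)
    (hlaw0 : ∀ i, ∀ B A : Set ℝ, MeasurableSet B → MeasurableSet A →
      (P {ω | θ i ω = 0 ∧ sig i ω ∈ B ∧ X i ω ∈ A}).toReal
        = (1 - p) * ∫ s in B, (∫ x in A, gaussDens s x) ∂gsig)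
    (hlaw1 : ∀ i, ∀ B A : Set ℝ, MeasurableSet B → MeasurableSet A →
      (P {ω | θ i ω = 1 ∧ sig i ω ∈ B ∧ X i ω ∈ A}).toReal
        = p * ∫ s in B, (∫ x in A, altDens gmu s x) ∂gsig)
    (hm : 0 < m)
    (alphaFun : ℝ → ℝ)
    (halphaFun : ∀ t : ℝ, alphaFun t =
      (∫ ω, ∑ i, Tstat p gmu (sig i ω) (X i ω) *
          (if Tstat p gmu (sig i ω) (X i ω) < t then (1 : ℝ) else 0) ∂P) /
        (∫ ω, ∑ i, (if Tstat p gmu (sig i ω) (X i ω) < t then (1 : ℝ) else 0) ∂P))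
    (t₁ t₂ : ℝ) (ht₁ : 0 < t₁) (ht₁₂ : t₁ < t₂) (ht₂ : t₂ < 1)
    (hpos : 0 < P {ω | Tstat p gmu (sig ⟨0, hm⟩ ω) (X ⟨0, hm⟩ ω) < t₁}) :
    alphaFun t₁ ≤ alphaFun t₂ :=
  statement3_general P m p hp gmu sig X hsigmeas hXmeas hm alphaFun halphaFun t₁ t₂ ht₁₂ hpos
end

section
/- Let T_1,…,T_m be integrable random variables on a probability space taking values in [0,1), let α ∈ (0,1) and λ > 0, and define δ_i = 1{T_i − α < λ(1 − T_i)}. Let d_1,…,d_m be arbitrary {0,1}-valued random variables on the same probability space. If E[Σ_{i=1}^m (T_i − α)δ_i] = 0 and E[Σ_{i=1}^m (T_i − α)d_i] ≤ 0, then E[Σ_{i=1}^m (1 − T_i)δ_i] ≥ E[Σ_{i=1}^m (1 − T_i)d_i]. -/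
open MeasureTheory Set

/-- Neyman–Pearson-type comparison step in the proof of Theorem 1.
If `δᵢ = 1{Tᵢ − α < λ(1 − Tᵢ)}` and `d` is any `{0,1}`-valued collection with
`E[Σ (Tᵢ − α)δᵢ] = 0` and `E[Σ (Tᵢ − α)dᵢ] ≤ 0`, then
`E[Σ (1 − Tᵢ)δᵢ] ≥ E[Σ (1 − Tᵢ)dᵢ]`. -/
theorem statement5 {Ω : Type} [MeasurableSpace Ω] (P : Measure Ω) [IsProbabilityMeasure P]
    (m : ℕ) (T : Fin m → Ω → ℝ)
    (hTmeas : ∀ i, Measurable (T i))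
    (hTint : ∀ i, Integrable (T i) P)
    (hTrange : ∀ i ω, T i ω ∈ Ico (0 : ℝ) 1)
    (α lam : ℝ) (hα : α ∈ Ioo (0 : ℝ) 1) (hlam : 0 < lam)
    (δ d : Fin m → Ω → ℝ)
    (hδdef : ∀ i ω, δ i ω = if T i ω - α < lam * (1 - T i ω) then 1 else 0)
    (hdmeas : ∀ i, Measurable (d i))
    (hdval : ∀ i ω, d i ω = 0 ∨ d i ω = 1)
    (h1 : ∫ ω, ∑ i, (T i ω - α) * δ i ω ∂P = 0)
    (h2 : ∫ ω, ∑ i, (T i ω - α) * d i ω ∂P ≤ 0) :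
    ∫ ω, ∑ i, (1 - T i ω) * d i ω ∂P ≤ ∫ ω, ∑ i, (1 - T i ω) * δ i ω ∂P := by
  have hδmeas : ∀ i, Measurable (δ i) := by
    intro i
    have : δ i = fun ω => if T i ω - α < lam * (1 - T i ω) then (1:ℝ) else 0 := by
      funext ω; exact hδdef i ω
    rw [this]
    exact Measurable.ite
      (measurableSet_lt ((hTmeas i).sub measurable_const)
        (measurable_const.mul (measurable_const.sub (hTmeas i))))
      measurable_const measurable_const
  have hδbd : ∀ i ω, ‖δ i ω‖ ≤ 1 := by
    intro i ω; rw [hδdef i ω]; split <;> simp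
  have hdbd : ∀ i ω, ‖d i ω‖ ≤ 1 := by
    intro i ω; rcases hdval i ω with h | h <;> simp [h]
  -- integrability of the per-index products
  have hint : ∀ (g : Fin m → Ω → ℝ), (∀ i, Measurable (g i)) → (∀ i ω, ‖g i ω‖ ≤ 1) →
      ∀ (c : ℝ) (i : Fin m), Integrable (fun ω => (c - T i ω) * g i ω) P := by
    intro g hg hgb c i
    have h1 : Integrable (fun ω => c - T i ω) P := (integrable_const c).sub (hTint i)
    exact (h1.bdd_mul (c := 1) (hg i).aestronglyMeasurable
      (Filter.Eventually.of_forall fun ω => hgb i ω)).congr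
      (Filter.Eventually.of_forall fun ω => mul_comm _ _)
  have hTaδ : ∀ i, Integrable (fun ω => (T i ω - α) * δ i ω) P := by
    intro i
    have := hint δ hδmeas hδbd α i
    have h := this.neg
    refine h.congr (Filter.Eventually.of_forall fun ω => ?_)
    simp only [Pi.neg_apply]; ring
  have hTad : ∀ i, Integrable (fun ω => (T i ω - α) * d i ω) P := by
    intro i
    have := hint d hdmeas hdbd α i
    refine this.neg.congr (Filter.Eventually.of_forall fun ω => ?_)
    simp only [Pi.neg_apply]; ring
  have h1Tδ : ∀ i, Integrable (fun ω => (1 - T i ω) * δ i ω) P := hint δ hδmeas hδbd 1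
  have h1Td : ∀ i, Integrable (fun ω => (1 - T i ω) * d i ω) P := hint d hdmeas hdbd 1
  have hsum_Taδ : Integrable (fun ω => ∑ i, (T i ω - α) * δ i ω) P :=
    integrable_finset_sum _ fun i _ => hTaδ i
  have hsum_Tad : Integrable (fun ω => ∑ i, (T i ω - α) * d i ω) P :=
    integrable_finset_sum _ fun i _ => hTad i
  have hsum_1Tδ : Integrable (fun ω => ∑ i, (1 - T i ω) * δ i ω) P :=
    integrable_finset_sum _ fun i _ => h1Tδ i
  have hsum_1Td : Integrable (fun ω => ∑ i, (1 - T i ω) * d i ω) P :=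
    integrable_finset_sum _ fun i _ => h1Td i
  -- pointwise comparison
  have hpt : ∀ ω, (∑ i, (T i ω - α) * δ i ω) - lam * ∑ i, (1 - T i ω) * δ i ω
      ≤ (∑ i, (T i ω - α) * d i ω) - lam * ∑ i, (1 - T i ω) * d i ω := by
    intro ω
    rw [Finset.mul_sum, Finset.mul_sum, ← Finset.sum_sub_distrib, ← Finset.sum_sub_distrib]
    apply Finset.sum_le_sum
    intro i _
    rcases hdval i ω with hd0 | hd1
    · rw [hδdef i ω, hd0]
      split <;> rename_i h <;> nlinarith
    · rw [hδdef i ω, hd1]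
      split <;> rename_i h <;> nlinarith
  -- integrate the pointwise inequality
  have hmono : ∫ ω, ((∑ i, (T i ω - α) * δ i ω) - lam * ∑ i, (1 - T i ω) * δ i ω) ∂P
      ≤ ∫ ω, ((∑ i, (T i ω - α) * d i ω) - lam * ∑ i, (1 - T i ω) * d i ω) ∂P := by
    apply integral_mono (hsum_Taδ.sub (hsum_1Tδ.const_mul lam))
      (hsum_Tad.sub (hsum_1Td.const_mul lam)) hpt
  rw [integral_sub hsum_Taδ (hsum_1Tδ.const_mul lam),
      integral_sub hsum_Tad (hsum_1Td.const_mul lam),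
      integral_const_mul, integral_const_mul, h1] at hmono
  have hle : lam * ∫ ω, ∑ i, (1 - T i ω) * d i ω ∂P
      ≤ lam * ∫ ω, ∑ i, (1 - T i ω) * δ i ω ∂P := by linarith
  exact le_of_mul_le_mul_left hle hlam
end
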